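/- arXiv:1602.08315 — 3 statements merged into one kernel-verified Lean document; each statement's English description precedes it below -/
import Mathlib

section
/- Let m ∈ (0,1) and h ∈ (0, 1/4). Define A(w) := (w^{m−1} − 1)/((m−1)(w−1)) for w > 0, w ≠ 1, and A(1) := 1. Then for all w ∈ [1−h, 1+h] with w > 0 one has (1+h)^{m−2} ≤ A(w) ≤ (1−h)^{m−2}. -/
/-!
By the mean value theorem, `A(w) = c ^ (m - 2)` for some `c` between `w` and `1`, hence in
`[1 - h, 1 + h]`; since `m - 2 < 0`, `c ↦ c ^ (m - 2)` is antitone there.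
-/

open Real Set

/-- The quotient `A(w)` of the statement, written with `p = m - 1`. -/
noncomputable def rpowQuot (p w : ℝ) : ℝ :=
  if w = 1 then 1 else (w ^ p - 1) / (p * (w - 1))

theorem exists_rpow_slope_eq {a b : ℝ} (ha : 0 < a) (hab : a < b) (p : ℝ) :
    ∃ c ∈ Ioo a b, (b ^ p - a ^ p) / (b - a) = p * c ^ (p - 1) := by
  have hcont : ContinuousOn (fun x : ℝ => x ^ p) (Icc a b) :=
    continuousOn_id.rpow_const fun x hx => Or.inl (ha.trans_le hx.1).ne'
  obtain ⟨c, hc, hslope⟩ := exists_hasDerivAt_eq_slope (fun x : ℝ => x ^ p)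
    (fun x => p * x ^ (p - 1)) hab hcont
    fun x hx => hasDerivAt_rpow_const (Or.inl (ha.trans hx.1).ne')
  exact ⟨c, hc, hslope.symm⟩

theorem exists_mem_uIcc_rpowQuot_eq {p w : ℝ} (hp : p ≠ 0) (hw : 0 < w) :
    ∃ c ∈ uIcc w 1, rpowQuot p w = c ^ (p - 1) := by
  by_cases hw1 : w = 1
  · exact ⟨1, by simp, by simp [rpowQuot, hw1]⟩
  suffices ∃ c ∈ uIoo w 1, (w ^ p - 1) / (w - 1) = p * c ^ (p - 1) by
    obtain ⟨c, hc, hslope⟩ := this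
    refine ⟨c, uIoo_subset_uIcc_self hc, ?_⟩
    rw [rpowQuot, if_neg hw1, mul_comm, ← div_div, hslope, mul_div_cancel_left₀ _ hp]
  rcases lt_or_gt_of_ne hw1 with hlt | hgt
  · obtain ⟨c, hc, hslope⟩ := exists_rpow_slope_eq hw hlt p
    refine ⟨c, by rwa [uIoo_of_le hlt.le], ?_⟩
    rw [← hslope, one_rpow, ← neg_sub w 1, ← neg_sub (w ^ p) 1, neg_div_neg_eq]
  · obtain ⟨c, hc, hslope⟩ := exists_rpow_slope_eq one_pos hgt p
    refine ⟨c, by rwa [uIoo_of_ge hgt.le], ?_⟩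
    rw [← hslope, one_rpow]

theorem A_bounds_general (m h : ℝ) (hm1 : m < 1) (hh : h < 1/4) :
    ∀ w : ℝ, 1 - h ≤ w → w ≤ 1 + h → 0 < w →
      (1 + h) ^ (m - 2) ≤ (if w = 1 then 1 else (w ^ (m - 1) - 1) / ((m - 1) * (w - 1))) ∧
      (if w = 1 then 1 else (w ^ (m - 1) - 1) / ((m - 1) * (w - 1))) ≤ (1 - h) ^ (m - 2) := by
  intro w hw_ge hw_le hw
  obtain ⟨c, hc, hA⟩ := exists_mem_uIcc_rpowQuot_eq (p := m - 1) (by linarith) hw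
  have hc_mem : c ∈ Icc (1 - h) (1 + h) :=
    uIcc_subset_Icc ⟨hw_ge, hw_le⟩ ⟨by linarith, by linarith⟩ hc
  have hexp : m - 1 - 1 = m - 2 := by ring
  change (1 + h) ^ (m - 2) ≤ rpowQuot (m - 1) w ∧ rpowQuot (m - 1) w ≤ (1 - h) ^ (m - 2)
  rw [hA, hexp]
  have hnonpos : m - 2 ≤ 0 := by linarith
  exact ⟨rpow_le_rpow_of_nonpos (by linarith [hc_mem.1]) hc_mem.2 hnonpos,
    rpow_le_rpow_of_nonpos (by linarith) hc_mem.1 hnonpos⟩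

theorem A_bounds (m h : ℝ) (hm0 : 0 < m) (hm1 : m < 1) (hh0 : 0 < h) (hh : h < 1/4) :
    ∀ w : ℝ, 1 - h ≤ w → w ≤ 1 + h → 0 < w →
      (1 + h) ^ (m - 2) ≤ (if w = 1 then 1 else (w ^ (m - 1) - 1) / ((m - 1) * (w - 1))) ∧
      (if w = 1 then 1 else (w ^ (m - 1) - 1) / ((m - 1) * (w - 1))) ≤ (1 - h) ^ (m - 2) :=
  A_bounds_general m h hm1 hh
end

section
/- Let d ≥ 2, m ∈ (0,1), β, γ with γ < d and γ − 2 < β < (d−2)γ/d, and C₁ > C₂ > 0. Define 𝔅ᵢ(x) = (Cᵢ + |x|^{2+β−γ})^{1/(m−1)} for i = 1,2. Then ∫_{ℝ^d} (𝔅₂(x) − 𝔅₁(x)) |x|^{−γ} dx < ∞ if and only if m > m_* := (d−4−2β+γ)/(d−2−β). -/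
/-!
In polar coordinates the integral becomes `∫₀^∞ r^(d-1) (𝔅₂ - 𝔅₁)(r) r^(-γ) dr`. Near `0` the
difference `𝔅₂ - 𝔅₁` is bounded by `C₂^p`, `p = 1/(m-1) < 0`, so the radial integrand is
`O(r^(d-1-γ))`, integrable because `γ < d`. At infinity the mean value theorem for `s ↦ s^p` gives
`𝔅₂ - 𝔅₁ ≍ (r^(2+β-γ))^(p-1)`, so the radial integrand is `≍ r^θ` with
`θ = d - 1 - γ + (2+β-γ)(p-1)`, which is integrable at infinity iff `θ < -1`. Multiplying by
`1 - m > 0` turns `θ < -1` into `m > m_*`.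
-/

open MeasureTheory Set Filter Asymptotics Module

namespace Real

variable {p a b : ℝ}

theorem rpow_sub_rpow_mem_Icc_of_nonpos (hp : p ≤ 0) (ha : 0 < a) (hab : a < b) :
    a ^ p - b ^ p ∈ Icc (-p * (b - a) * b ^ (p - 1)) (-p * (b - a) * a ^ (p - 1)) := by
  obtain ⟨c, ⟨hac, hcb⟩, hslope⟩ := exists_hasDerivAt_eq_slope (· ^ p) (fun s => p * s ^ (p - 1))
    hab (continuousOn_id.rpow_const fun s hs => Or.inl (ha.trans_le hs.1).ne')
    fun s hs => hasDerivAt_rpow_const (Or.inl (ha.trans hs.1).ne')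
  have hc : 0 < c := ha.trans hac
  have hdiff : a ^ p - b ^ p = -p * (b - a) * c ^ (p - 1) := by
    rw [eq_div_iff (sub_ne_zero.2 hab.ne')] at hslope
    linarith
  have hK : 0 ≤ -p * (b - a) := mul_nonneg (neg_nonneg.2 hp) (sub_nonneg.2 hab.le)
  rw [hdiff]
  exact ⟨mul_le_mul_of_nonneg_left (rpow_le_rpow_of_nonpos hc hcb.le (by linarith)) hK,
    mul_le_mul_of_nonneg_left (rpow_le_rpow_of_nonpos ha hac.le (by linarith)) hK⟩

theorem rpow_add_sub_rpow_add_mem_Icc_zero (hp : p ≤ 0) (ha : 0 < a) (hab : a ≤ b) {t : ℝ}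
    (ht : 0 ≤ t) : (a + t) ^ p - (b + t) ^ p ∈ Icc 0 (a ^ p) :=
  ⟨sub_nonneg.2 (rpow_le_rpow_of_nonpos (by linarith) (by linarith) hp),
    sub_le_self_iff _ |>.2 (rpow_nonneg (by linarith) p) |>.trans'
      (sub_le_sub_right (rpow_le_rpow_of_nonpos ha (by linarith) hp) _)⟩

theorem isTheta_rpow_add_sub_rpow_add_atTop (hp : p < 0) (ha : 0 ≤ a) (hab : a < b) :
    (fun t => (a + t) ^ p - (b + t) ^ p) =Θ[atTop] fun t => t ^ (p - 1) := by
  set K := -p * (b - a)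
  have hK : 0 < K := mul_pos (neg_pos.2 hp) (sub_pos.2 hab)
  have hc : 0 < K * 2 ^ (p - 1) := mul_pos hK (rpow_pos_of_pos two_pos _)
  have hbounds : ∀ᶠ t in atTop, 0 < t ∧
      K * 2 ^ (p - 1) * t ^ (p - 1) ≤ (a + t) ^ p - (b + t) ^ p ∧
      (a + t) ^ p - (b + t) ^ p ≤ K * t ^ (p - 1) := by
    filter_upwards [eventually_ge_atTop b] with t hbt
    have ht : 0 < t := by linarith
    obtain ⟨hlow, hup⟩ := rpow_sub_rpow_mem_Icc_of_nonpos hp.le (by linarith : 0 < a + t)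
      (by linarith : a + t < b + t)
    rw [add_sub_add_right_eq_sub] at hlow hup
    refine ⟨ht, le_trans ?_ hlow, hup.trans ?_⟩
    · rw [mul_assoc, ← mul_rpow zero_le_two ht.le]
      exact mul_le_mul_of_nonneg_left
        (rpow_le_rpow_of_nonpos (by linarith) (by linarith) (by linarith)) hK.le
    · exact mul_le_mul_of_nonneg_left
        (rpow_le_rpow_of_nonpos ht (by linarith) (by linarith)) hK.le
  refine ⟨.of_bound K ?_, .of_bound (K * 2 ^ (p - 1))⁻¹ ?_⟩ <;>
    filter_upwards [hbounds] with t ⟨ht, hlow, hup⟩ <;>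
    rw [norm_of_nonneg (rpow_pos_of_pos ht _).le,
      norm_of_nonneg ((mul_pos hc (rpow_pos_of_pos ht _)).le.trans hlow)]
  · exact hup
  · rw [inv_mul_eq_div, le_div_iff₀ hc, mul_comm]
    exact hlow

end Real

theorem Asymptotics.IsTheta.integrableAtFilter_iff {α E F : Type*} [MeasurableSpace α]
    [NormedAddCommGroup E] [NormedAddCommGroup F] {l : Filter α} [l.IsMeasurablyGenerated]
    {μ : Measure α} {f : α → E} {g : α → F} (h : f =Θ[l] g)
    (hf : StronglyMeasurableAtFilter f l μ) (hg : StronglyMeasurableAtFilter g l μ) :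
    IntegrableAtFilter f l μ ↔ IntegrableAtFilter g l μ :=
  ⟨h.2.integrableAtFilter hg, h.1.integrableAtFilter hf⟩

theorem integrableOn_Ioi_zero_iff_of_isTheta_rpow {f : ℝ → ℝ} {a b C : ℝ}
    (hf : ContinuousOn f (Ioi 0)) (ha : -1 < a) (h0 : ∀ r ∈ Ioo (0 : ℝ) 1, ‖f r‖ ≤ C * r ^ a)
    (hb : f =Θ[atTop] fun r => r ^ b) :
    IntegrableOn f (Ioi 0) ↔ b < -1 := by
  have hnear : IntegrableOn f (Ioo 0 1) :=
    (((intervalIntegral.integrableOn_Ioo_rpow_iff one_pos).2 ha).const_mul C).mono'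
      ((hf.mono Ioo_subset_Ioi_self).aestronglyMeasurable measurableSet_Ioo)
      ((ae_restrict_mem measurableSet_Ioo).mono h0)
  have hloc : LocallyIntegrableOn f (Ici 1) :=
    (hf.mono (Ici_subset_Ioi.2 zero_lt_one)).locallyIntegrableOn measurableSet_Ici
  have hmeas {g : ℝ → ℝ} (hg : ContinuousOn g (Ioi 0)) : StronglyMeasurableAtFilter g atTop :=
    ⟨Ioi 0, Ioi_mem_atTop 0, hg.aestronglyMeasurable measurableSet_Ioi⟩
  rw [← Ioo_union_Ici_eq_Ioi zero_lt_one, integrableOn_union,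
    integrableOn_Ici_iff_integrableAtFilter_atTop,
    hb.integrableAtFilter_iff (hmeas hf)
      (hmeas (continuousOn_id.rpow_const fun r (hr : 0 < r) => Or.inl hr.ne')),
    integrableAtFilter_rpow_atTop_iff]
  simp [hnear, hloc]

open Real in
theorem integrableOn_Ioi_pow_mul_rpow_add_sub_rpow_add_iff {n : ℕ} {α γ p C₁ C₂ : ℝ}
    (hα : 0 < α) (hp : p < 0) (hC₂ : 0 < C₂) (hC : C₂ < C₁) (hγ : γ < n + 1) :
    IntegrableOn (fun r : ℝ => r ^ n * (((C₂ + r ^ α) ^ p - (C₁ + r ^ α) ^ p) * r ^ (-γ)))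
      (Ioi 0) ↔ n - γ + α * (p - 1) < -1 := by
  apply integrableOn_Ioi_zero_iff_of_isTheta_rpow (a := n - γ) (C := C₂ ^ p)
  · intro r (hr : 0 < r)
    have hC₁ : 0 < C₁ := hC₂.trans hC
    apply ContinuousAt.continuousWithinAt
    fun_prop (disch := exact Or.inl (by positivity))
  · linarith
  · rintro r ⟨hr, -⟩
    obtain ⟨hgap0, hgap⟩ :=
      rpow_add_sub_rpow_add_mem_Icc_zero hp.le hC₂ hC.le (rpow_nonneg hr.le α)
    rw [norm_of_nonneg (mul_nonneg (by positivity) (mul_nonneg hgap0 (by positivity)))]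
    calc r ^ n * (((C₂ + r ^ α) ^ p - (C₁ + r ^ α) ^ p) * r ^ (-γ))
        = ((C₂ + r ^ α) ^ p - (C₁ + r ^ α) ^ p) * r ^ ((n : ℝ) - γ) := by
          rw [sub_eq_add_neg (n : ℝ), rpow_add hr, rpow_natCast]; ring
      _ ≤ C₂ ^ p * r ^ ((n : ℝ) - γ) := mul_le_mul_of_nonneg_right hgap (by positivity)
  · have hgap := isTheta_rpow_add_sub_rpow_add_atTop hp hC₂.le hC
    have hgap' : (fun r : ℝ => (C₂ + r ^ α) ^ p - (C₁ + r ^ α) ^ p) =Θ[atTop]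
        fun r => (r ^ α) ^ (p - 1) :=
      ⟨hgap.1.comp_tendsto (tendsto_rpow_atTop hα), hgap.2.comp_tendsto (tendsto_rpow_atTop hα)⟩
    refine ((isTheta_refl _ _).mul (hgap'.mul (isTheta_refl _ _))).trans_eventuallyEq ?_
    filter_upwards [eventually_gt_atTop 0] with r hr
    rw [← rpow_natCast, ← rpow_mul hr.le, ← rpow_add hr, ← rpow_add hr]
    ring_nf

theorem sub_add_mul_inv_sub_one_lt_neg_one_iff {d β γ m : ℝ} (hm : m < 1)
    (hD : 0 < d - 2 - β) :
    d - 1 - γ + (2 + β - γ) * (1 / (m - 1) - 1) < -1 ↔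
      (d - 4 - 2 * β + γ) / (d - 2 - β) < m := by
  have hm' : 0 < 1 - m := sub_pos.2 hm
  have key : (d - 1 - γ + (2 + β - γ) * (1 / (m - 1) - 1) - -1) * (1 - m) =
      d - 4 - 2 * β + γ - m * (d - 2 - β) := by
    field_simp [(sub_neg.2 hm).ne]
    ring
  rw [div_lt_iff₀ hD, ← sub_neg, ← sub_neg (a := d - 4 - 2 * β + γ), ← key]
  exact ⟨fun h => mul_neg_of_neg_of_pos h hm', fun h => neg_of_mul_neg_left h hm'.le⟩

theorem barenblatt_difference_integrable_iff_general (d : ℕ) (β γ m C₁ C₂ : ℝ) (hd : 2 ≤ d)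
    (hγ : γ < d) (hβ1 : γ - 2 < β) (hβ2 : β < (d - 2) * γ / d)
    (hm1 : m < 1) (hC2 : 0 < C₂) (hC : C₂ < C₁) :
    Integrable (fun x : EuclideanSpace ℝ (Fin d) =>
        ((C₂ + ‖x‖ ^ (2 + β - γ)) ^ (1 / (m - 1))
          - (C₁ + ‖x‖ ^ (2 + β - γ)) ^ (1 / (m - 1))) * ‖x‖ ^ (-γ)) volume ↔
    (d - 4 - 2 * β + γ) / (d - 2 - β) < m := by
  have hd₁ : 1 ≤ d := by omega
  have : Nontrivial (EuclideanSpace ℝ (Fin d)) :=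
    nontrivial_of_finrank_pos (R := ℝ) (by rw [finrank_euclideanSpace_fin]; omega)
  have hdR : (2 : ℝ) ≤ d := by exact_mod_cast hd
  have hD : 0 < (d : ℝ) - 2 - β := by
    have : (d - 2) * γ / d ≤ (d : ℝ) - 2 := by
      rw [div_le_iff₀ (by linarith)]; nlinarith
    linarith
  rw [integrable_fun_norm_addHaar volume (f := fun r =>
      ((C₂ + r ^ (2 + β - γ)) ^ (1 / (m - 1)) - (C₁ + r ^ (2 + β - γ)) ^ (1 / (m - 1))) *
        r ^ (-γ)),
    finrank_euclideanSpace_fin]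
  simp only [smul_eq_mul]
  rw [integrableOn_Ioi_pow_mul_rpow_add_sub_rpow_add_iff (by linarith)
      (one_div_neg.2 (by linarith)) hC2 hC (by push_cast [Nat.cast_sub hd₁]; linarith),
    Nat.cast_sub hd₁, Nat.cast_one, sub_add_mul_inv_sub_one_lt_neg_one_iff hm1 hD]

theorem barenblatt_difference_integrable_iff (d : ℕ) (β γ m C₁ C₂ : ℝ) (hd : 2 ≤ d)
    (hγ : γ < d) (hβ1 : γ - 2 < β) (hβ2 : β < (d - 2) * γ / d)
    (hm0 : 0 < m) (hm1 : m < 1) (hC2 : 0 < C₂) (hC : C₂ < C₁) :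
    Integrable (fun x : EuclideanSpace ℝ (Fin d) =>
        ((C₂ + ‖x‖ ^ (2 + β - γ)) ^ (1 / (m - 1))
          - (C₁ + ‖x‖ ^ (2 + β - γ)) ^ (1 / (m - 1))) * ‖x‖ ^ (-γ)) volume ↔
    (d - 4 - 2 * β + γ) / (d - 2 - β) < m :=
  barenblatt_difference_integrable_iff_general d β γ m C₁ C₂ hd hγ hβ1 hβ2 hm1 hC2 hC
end

section
/- Let m ∈ (0,1) and h ∈ (0,1/4). Suppose nonnegative reals F, G, I, J satisfy m(1+h)^{m−2}G ≤ F ≤ m(1−h)^{m−2}G, J ≤ ((1+h)^{3−2m}/((1−m)(1−h)))·I + μ·h·G, and 2(1−m)Λ·G ≤ J for some Λ, μ > 0. Then ((1−h)^{3−m}/(1+h)^{3−2m})·(2(1−m)Λ − μh)·F ≤ (m/(1−m))·I. -/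
/-!
The spectral gap `2(1-m)Λ G ≤ J`, combined with the comparison of `J` with `I`, gives
`(2(1-m)Λ - μh) G ≤ (1+h)^(3-2m) / ((1-m)(1-h)) · I`. Passing from `G` to `F` through the upper
bound `F ≤ m(1-h)^(m-2) G` costs the factor `(1-h)^(m-2)`, which the prefactor `(1-h)^(3-m)`
reduces to `1-h`, and this cancels against the `1-h` in the comparison constant.
-/

lemma Real.rpow_three_sub_mul_rpow_sub_two {x : ℝ} (hx : 0 < x) (m : ℝ) :
    x ^ (3 - m) * x ^ (m - 2) = x := by
  rw [← Real.rpow_add hx]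
  norm_num

theorem entropy_production_transfer_general (m h F G I J Λ μ : ℝ)
    (hm0 : 0 < m) (hm1 : m < 1) (hh0 : 0 < h) (hh : h < 1/4)
    (h2 : F ≤ m * (1 - h) ^ (m - 2) * G)
    (h3 : J ≤ (1 + h) ^ (3 - 2 * m) / ((1 - m) * (1 - h)) * I + μ * h * G)
    (h4 : 2 * (1 - m) * Λ * G ≤ J)
    (h5 : 0 ≤ 2 * (1 - m) * Λ - μ * h) :
    (1 - h) ^ (3 - m) / (1 + h) ^ (3 - 2 * m) * (2 * (1 - m) * Λ - μ * h) * F ≤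
      m / (1 - m) * I := by
  have hm : 0 < 1 - m := by linarith
  have hq : 0 < 1 - h := by linarith
  set A := (1 + h) ^ (3 - 2 * m)
  set B := (1 - h) ^ (3 - m)
  set c := 2 * (1 - m) * Λ - μ * h
  have hA : 0 < A := Real.rpow_pos_of_pos (by linarith) _
  have hgap : c * G ≤ A / ((1 - m) * (1 - h)) * I := by linear_combination h4 + h3
  calc B / A * c * F ≤ B / A * c * (m * (1 - h) ^ (m - 2) * G) := by gcongr
    _ = m * (B * (1 - h) ^ (m - 2)) / A * (c * G) := by ring
    _ = m * (1 - h) / A * (c * G) := by rw [Real.rpow_three_sub_mul_rpow_sub_two hq]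
    _ ≤ m * (1 - h) / A * (A / ((1 - m) * (1 - h)) * I) := by gcongr
    _ = m / (1 - m) * I := by field_simp

theorem entropy_production_transfer (m h F G I J Λ μ : ℝ)
    (hm0 : 0 < m) (hm1 : m < 1) (hh0 : 0 < h) (hh : h < 1/4)
    (hF : 0 ≤ F) (hG : 0 ≤ G) (hI : 0 ≤ I) (hJ : 0 ≤ J)
    (hΛ : 0 < Λ) (hμ : 0 < μ)
    (h1 : m * (1 + h) ^ (m - 2) * G ≤ F)
    (h2 : F ≤ m * (1 - h) ^ (m - 2) * G)
    (h3 : J ≤ (1 + h) ^ (3 - 2 * m) / ((1 - m) * (1 - h)) * I + μ * h * G)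
    (h4 : 2 * (1 - m) * Λ * G ≤ J)
    (h5 : 0 ≤ 2 * (1 - m) * Λ - μ * h) :
    (1 - h) ^ (3 - m) / (1 + h) ^ (3 - 2 * m) * (2 * (1 - m) * Λ - μ * h) * F ≤
      m / (1 - m) * I :=
  entropy_production_transfer_general m h F G I J Λ μ hm0 hm1 hh0 hh h2 h3 h4 h5
end
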